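/- arXiv:2406.10975 — 3 statements merged into one kernel-verified Lean document; each statement's English description precedes it below -/
import Mathlib

section
/- Let 0 < δ ≤ ε ≤ 1/3 and a > 0. Then (a²/(1−δ)²)(1−ε−δ) + (a²/ε²) ∫_{1−ε}^{1} ((1−ε)/z² − ε/(1−δ))² dz ≤ 4a²/ε. -/
set_option maxHeartbeats 1600000 in
theorem stmt6 (δ ε a : ℝ) (hδ : 0 < δ) (hδε : δ ≤ ε) (hε : ε ≤ 1/3) (ha : 0 < a) :
    a ^ 2/(1 - δ) ^ 2 * (1 - ε - δ)
      + a ^ 2/ε ^ 2 * (∫ z in (1 - ε)..1, ((1 - ε)/z ^ 2 - ε/(1 - δ)) ^ 2)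
      ≤ 4 * a ^ 2/ε := by
  have hε0 : 0 < ε := lt_of_lt_of_le hδ hδε
  have hc : (0:ℝ) < 1 - ε := by linarith
  have hd : (0:ℝ) < 1 - δ := by linarith
  have h0 : (0:ℝ) ∉ Set.uIcc (1 - ε) 1 := by
    rw [Set.mem_uIcc]
    push_neg
    constructor <;> intro h <;> linarith
  have key : (∫ z in (1 - ε)..1, ((1 - ε)/z ^ 2 - ε/(1 - δ)) ^ 2)
      = (1 - ε) ^ 2 * (((1:ℝ) ^ ((-4:ℤ) + 1) - (1 - ε) ^ ((-4:ℤ) + 1)) / (((-4:ℤ) : ℝ) + 1))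
        - 2 * (1 - ε) * (ε / (1 - δ))
            * (((1:ℝ) ^ ((-2:ℤ) + 1) - (1 - ε) ^ ((-2:ℤ) + 1)) / (((-2:ℤ) : ℝ) + 1))
        + (ε / (1 - δ)) ^ 2 * ((1:ℝ) - (1 - ε)) := by
    have i4 : IntervalIntegrable (fun z : ℝ => z ^ (-4:ℤ)) MeasureTheory.volume (1 - ε) 1 :=
      intervalIntegral.intervalIntegrable_zpow (Or.inr h0)
    have i2 : IntervalIntegrable (fun z : ℝ => z ^ (-2:ℤ)) MeasureTheory.volume (1 - ε) 1 :=
      intervalIntegral.intervalIntegrable_zpow (Or.inr h0)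
    have hcongr : ∀ z ∈ Set.uIcc (1 - ε) 1,
        ((1 - ε)/z ^ 2 - ε/(1 - δ)) ^ 2
          = (1 - ε) ^ 2 * z ^ (-4:ℤ) - 2 * (1 - ε) * (ε/(1 - δ)) * z ^ (-2:ℤ)
            + (ε/(1 - δ)) ^ 2 := by
      intro z hz
      have hz0 : z ≠ 0 := fun h => h0 (h ▸ hz)
      have e4 : z ^ (-4:ℤ) = (z ^ 4)⁻¹ := by
        rw [show ((-4:ℤ)) = -(((4:ℕ)):ℤ) by norm_num, zpow_neg, zpow_natCast]
      have e2 : z ^ (-2:ℤ) = (z ^ 2)⁻¹ := by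
        rw [show ((-2:ℤ)) = -(((2:ℕ)):ℤ) by norm_num, zpow_neg, zpow_natCast]
      rw [e4, e2]
      field_simp
      ring
    rw [intervalIntegral.integral_congr hcongr]
    rw [intervalIntegral.integral_add ((i4.const_mul _).sub (i2.const_mul _))
        intervalIntegrable_const,
      intervalIntegral.integral_sub (i4.const_mul _) (i2.const_mul _),
      intervalIntegral.integral_const_mul, intervalIntegral.integral_const_mul,
      integral_zpow (Or.inr ⟨by norm_num, h0⟩), integral_zpow (Or.inr ⟨by norm_num, h0⟩),
      intervalIntegral.integral_const, smul_eq_mul]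
    ring
  rw [key]
  have h1 : ((1:ℝ)) ^ ((-4:ℤ) + 1) = 1 := one_zpow _
  have h2 : ((1:ℝ)) ^ ((-2:ℤ) + 1) = 1 := one_zpow _
  have h3 : (1 - ε) ^ ((-4:ℤ) + 1) = ((1 - ε) ^ 3)⁻¹ := by
    rw [show ((-4:ℤ) + 1) = -(((3:ℕ)):ℤ) by norm_num, zpow_neg, zpow_natCast]
  have h4 : (1 - ε) ^ ((-2:ℤ) + 1) = ((1 - ε) ^ 1)⁻¹ := by
    rw [show ((-2:ℤ) + 1) = -(((1:ℕ)):ℤ) by norm_num, zpow_neg, zpow_natCast]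
  rw [h1, h2, h3, h4]
  have hmain : (1:ℝ)/(1 - δ) ^ 2 * (1 - ε - δ)
      + (1:ℝ)/ε ^ 2 *
        ((1 - ε) ^ 2 * ((1 - ((1 - ε) ^ 3)⁻¹) / (((-4:ℤ) : ℝ) + 1))
          - 2 * (1 - ε) * (ε / (1 - δ)) * ((1 - ((1 - ε) ^ 1)⁻¹) / (((-2:ℤ) : ℝ) + 1))
          + (ε / (1 - δ)) ^ 2 * ((1:ℝ) - (1 - ε))) ≤ 4/ε := by
    rw [show (((-4:ℤ) : ℝ) + 1) = (-3 : ℝ) by norm_num,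
      show (((-2:ℤ) : ℝ) + 1) = (-1 : ℝ) by norm_num]
    have hδ3 : δ ≤ 1/3 := hδε.trans hε
    have hq : 4/9 ≤ (1-δ)^2 := by nlinarith
    have he2 : ε^2 ≤ 1/9 := by nlinarith
    have key2 : 0 ≤ (9-6*ε)*(1-δ)^2 + 3*ε*δ*(1-δ) - ε^2*(4-δ)*(1-δ) := by
      nlinarith [mul_nonneg (mul_nonneg hε0.le hδ.le) (by linarith : (0:ℝ) ≤ 1-δ),
        mul_nonneg (sq_nonneg ε) hδ.le,
        mul_nonneg (mul_nonneg (sq_nonneg ε) hδ.le) (by linarith : (0:ℝ) ≤ 1-δ),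
        mul_nonneg (sq_nonneg ε) (by linarith : (0:ℝ) ≤ 1-δ)]
    have hP : 0 ≤ 12*ε*(1-ε)*(1-δ)^2 - 3*ε^2*(1-ε)*(1-ε-δ) - (1-(1-ε)^3)*(1-δ)^2
        + 6*ε^2*(1-ε)*(1-δ) - 3*ε^3*(1-ε) := by
      nlinarith [mul_nonneg hε0.le key2]
    have hfrac : 4/ε - ((1:ℝ)/(1 - δ) ^ 2 * (1 - ε - δ)
        + (1:ℝ)/ε ^ 2 *
          ((1 - ε) ^ 2 * ((1 - ((1 - ε) ^ 3)⁻¹) / (-3 : ℝ))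
            - 2 * (1 - ε) * (ε / (1 - δ)) * ((1 - ((1 - ε) ^ 1)⁻¹) / (-1 : ℝ))
            + (ε / (1 - δ)) ^ 2 * ((1:ℝ) - (1 - ε))))
        = ((1 - ε) ^ 2 * (12*ε*(1-ε)*(1-δ)^2 - 3*ε^2*(1-ε)*(1-ε-δ) - (1-(1-ε)^3)*(1-δ)^2
            + 6*ε^2*(1-ε)*(1-δ) - 3*ε^3*(1-ε)))
          / (3*ε^2*(1-ε)^3*(1-δ)^2) := by
      rw [pow_one]
      have h6 : ε - 1 ≠ 0 := by intro h; nlinarith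
      field_simp [hε0.ne', hd.ne', hc.ne', h6]
      ring
    have hnn : 0 ≤ ((1 - ε) ^ 2 * (12*ε*(1-ε)*(1-δ)^2 - 3*ε^2*(1-ε)*(1-ε-δ)
          - (1-(1-ε)^3)*(1-δ)^2 + 6*ε^2*(1-ε)*(1-δ) - 3*ε^3*(1-ε)))
          / (3*ε^2*(1-ε)^3*(1-δ)^2) :=
      div_nonneg (mul_nonneg (sq_nonneg _) hP) (by positivity)
    linarith
  calc a ^ 2/(1 - δ) ^ 2 * (1 - ε - δ)
      + a ^ 2/ε ^ 2 *
        ((1 - ε) ^ 2 * ((1 - ((1 - ε) ^ 3)⁻¹) / (((-4:ℤ) : ℝ) + 1))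
          - 2 * (1 - ε) * (ε / (1 - δ)) * ((1 - ((1 - ε) ^ 1)⁻¹) / (((-2:ℤ) : ℝ) + 1))
          + (ε / (1 - δ)) ^ 2 * ((1:ℝ) - (1 - ε)))
      = a ^ 2 * ((1:ℝ)/(1 - δ) ^ 2 * (1 - ε - δ)
          + (1:ℝ)/ε ^ 2 *
            ((1 - ε) ^ 2 * ((1 - ((1 - ε) ^ 3)⁻¹) / (((-4:ℤ) : ℝ) + 1))
              - 2 * (1 - ε) * (ε / (1 - δ)) * ((1 - ((1 - ε) ^ 1)⁻¹) / (((-2:ℤ) : ℝ) + 1))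
              + (ε / (1 - δ)) ^ 2 * ((1:ℝ) - (1 - ε)))) := by ring
    _ ≤ a ^ 2 * (4/ε) := by
        exact mul_le_mul_of_nonneg_left hmain (by positivity)
    _ = 4 * a ^ 2/ε := by ring
end

section
/- Let 0 < δ ≤ ε ≤ 1/3 and set a = (1/2)δ√ε. Then (1/2) + (1/√12)·(4a²/ε)^{1/2} − [(1/2)δ(1−a) − (a/ε)(1−ε)ln(1−ε)] ≤ 1/2 − ((18−7√3)/36)·δ − (1/3)·δ ε^{−1/2} |ln(1−ε)|. -/
set_option maxHeartbeats 1000000 in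
theorem stmt8 (δ ε a : ℝ) (hδ : 0 < δ) (hδε : δ ≤ ε) (hε : ε ≤ 1/3)
    (ha : a = (1/2) * δ * Real.sqrt ε) :
    1/2 + (1/Real.sqrt 12) * (4 * a ^ 2/ε) ^ ((1:ℝ)/2)
      - ((1/2) * δ * (1 - a) - a/ε * (1 - ε) * Real.log (1 - ε))
    ≤ 1/2 - ((18 - 7 * Real.sqrt 3)/36) * δ
      - (1/3) * δ / Real.sqrt ε * |Real.log (1 - ε)| := by
  have hε0 : 0 < ε := lt_of_lt_of_le hδ hδε
  set s := Real.sqrt ε with hsdef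
  have hs0 : 0 < s := Real.sqrt_pos.mpr hε0
  have hs2 : s ^ 2 = ε := Real.sq_sqrt hε0.le
  have h12 : Real.sqrt 12 = 2 * Real.sqrt 3 := by
    rw [show (12:ℝ) = 2^2 * 3 by norm_num, Real.sqrt_mul (by positivity),
      Real.sqrt_sq (by norm_num : (0:ℝ) ≤ 2)]
  have h3 : Real.sqrt 3 ^ 2 = 3 := Real.sq_sqrt (by norm_num)
  have h30 : 0 < Real.sqrt 3 := Real.sqrt_pos.mpr (by norm_num)
  have harg : 4 * a ^ 2 / ε = δ ^ 2 := by
    rw [ha, ← hs2]; field_simp; ring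
  have hpow : (4 * a ^ 2 / ε) ^ ((1:ℝ)/2) = δ := by
    rw [harg, ← Real.sqrt_eq_rpow, Real.sqrt_sq hδ.le]
  have hlog : Real.log (1 - ε) ≤ 0 :=
    Real.log_nonpos (by linarith) (by linarith)
  have habs : |Real.log (1 - ε)| = -Real.log (1 - ε) := abs_of_nonpos hlog
  set L := -Real.log (1 - ε) with hLdef
  have hL0 : 0 ≤ L := by simp only [hLdef]; linarith
  have hlogL : Real.log (1 - ε) = -L := by rw [hLdef]; ring
  rw [hpow, habs, ha, h12, hlogL]
  have key1 : δ * s ≤ Real.sqrt 3 / 9 := by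
    have hsle : s ≤ Real.sqrt 3 / 3 := by
      nlinarith [hs2, hδε, hε, hs0, h3, h30]
    nlinarith [hs0, hδ, hδε, hs2, hε, h3, h30]
  have key2 : L / 3 ≤ (1 - ε) * L / 2 := by nlinarith [hL0, hε]
  rw [← sub_nonneg]
  have h6 : 1 / (2 * Real.sqrt 3) = Real.sqrt 3 / 6 := by
    rw [div_eq_div_iff (by positivity) (by norm_num)]; nlinarith [h3]
  rw [h6]
  have expand : 1 / 2 - (18 - 7 * Real.sqrt 3) / 36 * δ - 1 / 3 * δ / s * L -
      (1 / 2 + Real.sqrt 3 / 6 * δ -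
        (1 / 2 * δ * (1 - 1 / 2 * δ * s) - 1 / 2 * δ * s / ε * (1 - ε) * (-L)))
      = δ * ((Real.sqrt 3 / 9 - δ * s) / 4 + ((1 - ε) * L / 2 - L / 3) / s) := by
    rw [← hs2]
    field_simp
    ring
  rw [expand]
  apply mul_nonneg hδ.le
  have h1 : 0 ≤ (Real.sqrt 3 / 9 - δ * s) / 4 := by linarith
  have h2 : 0 ≤ ((1 - ε) * L / 2 - L / 3) / s := div_nonneg (by linarith) hs0.le
  linarith
end

section
/- There is no pair (E, R) with E, R > 0 satisfying simultaneously E·R ≤ (√3/2)δ and (3/4)^{4/5} δ^{1/5} E R ≥ (2/(3π)) δ R and 1 − (2/(3π))δR − (3/4)^{4/5}δ^{1/5}ER ≥ 0 with δ = (√3/36) E^{−5} R^{−5}, once R is sufficiently large (R ≥ some explicit constant). -/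
theorem stmt14 : ∃ C : ℝ, 0 < C ∧ ∀ E R : ℝ, 0 < E → C ≤ R →
    ¬ (∃ δ : ℝ, δ = Real.sqrt 3/36 * E ^ (-(5:ℝ)) * R ^ (-(5:ℝ)) ∧
        E * R ≤ Real.sqrt 3/2 * δ ∧
        (2/(3 * Real.pi)) * δ * R ≤ ((3:ℝ)/4) ^ ((4:ℝ)/5) * δ ^ ((1:ℝ)/5) * E * R ∧
        1 - (2/(3 * Real.pi)) * δ * R
          - ((3:ℝ)/4) ^ ((4:ℝ)/5) * δ ^ ((1:ℝ)/5) * E * R ≥ 0) := by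
  refine ⟨200, by norm_num, ?_⟩
  intro E R hE hR
  rintro ⟨δ, hδ, h1, h2, h3⟩
  have hR0 : (0:ℝ) < R := lt_of_lt_of_le (by norm_num) hR
  set s := Real.sqrt 3 with hs
  have hs3 : s ^ 2 = 3 := Real.sq_sqrt (by norm_num)
  have hs1 : (1:ℝ) ≤ s := by
    rw [show (1:ℝ) = Real.sqrt 1 from Real.sqrt_one.symm]
    exact Real.sqrt_le_sqrt (by norm_num)
  have hE5 : E ^ (-(5:ℝ)) = (E ^ 5)⁻¹ := by
    rw [Real.rpow_neg hE.le, ← Real.rpow_natCast E 5]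
    norm_num
  have hR5 : R ^ (-(5:ℝ)) = (R ^ 5)⁻¹ := by
    rw [Real.rpow_neg hR0.le, ← Real.rpow_natCast R 5]
    norm_num
  have hδ' : δ = s/36 * (E ^ 5)⁻¹ * (R ^ 5)⁻¹ := by rw [hδ, hE5, hR5]
  have hδpos : 0 < δ := by
    rw [hδ']
    have : 0 < s := lt_of_lt_of_le one_pos hs1
    positivity
  have hδP : δ * (E ^ 5 * R ^ 5) = s/36 := by
    rw [hδ']; field_simp
  have hP : (0:ℝ) < E ^ 5 * R ^ 5 := by positivity
  -- From h1: (E*R)^6 ≤ 1/24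
  have h1' : (E*R)^6 ≤ 1/24 := by
    calc (E*R)^6 = E*R*(E^5*R^5) := by ring
      _ ≤ s/2*δ*(E^5*R^5) := mul_le_mul_of_nonneg_right h1 hP.le
      _ = s/2 * (δ*(E^5*R^5)) := by ring
      _ = s/2 * (s/36) := by rw [hδP]
      _ = s^2/72 := by ring
      _ = 1/24 := by rw [hs3]; norm_num
  have hu1 : E * R ≤ 1 := by
    by_contra h
    push_neg at h
    have := one_lt_pow₀ h (by norm_num : 6 ≠ 0)
    linarith
  -- From h2, h3: (2/(3π)) δ R ≤ 1
  have hπ : (0:ℝ) < Real.pi := Real.pi_pos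
  have hterm : 0 < ((3:ℝ)/4) ^ ((4:ℝ)/5) * δ ^ ((1:ℝ)/5) * E * R := by positivity
  have hA : (2/(3*Real.pi)) * δ * R ≤ 1 := by linarith
  have hδR : δ * R ≤ 3*Real.pi/2 := by
    have h := mul_le_mul_of_nonneg_left hA (le_of_lt (by positivity : (0:ℝ) < 3*Real.pi/2))
    have heq : (3*Real.pi/2) * ((2/(3*Real.pi))*δ*R) = δ*R := by
      field_simp
    rw [heq] at h
    linarith
  -- s/36 ≤ (3π/2) * (E^5 * R^4)
  have hQ : (0:ℝ) < E ^ 5 * R ^ 4 := by positivity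
  have key : s/36 ≤ 3*Real.pi/2 * (E^5*R^4) := by
    calc s/36 = (δ*R)*(E^5*R^4) := by rw [← hδP]; ring
      _ ≤ (3*Real.pi/2)*(E^5*R^4) := mul_le_mul_of_nonneg_right hδR hQ.le
  -- multiply by R: s*R/36 ≤ (3π/2)*(E*R)^5 ≤ 3π/2
  have key2 : s*R/36 ≤ 3*Real.pi/2 * ((E*R)^5) := by
    have := mul_le_mul_of_nonneg_right key hR0.le
    calc s*R/36 = s/36 * R := by ring
      _ ≤ 3*Real.pi/2 * (E^5*R^4) * R := this
      _ = 3*Real.pi/2 * ((E*R)^5) := by ring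
  have hu5 : (E*R)^5 ≤ 1 := pow_le_one₀ (by positivity) hu1
  have hπ315 : Real.pi < 3.15 := Real.pi_lt_d2
  nlinarith [mul_le_mul_of_nonneg_left hu5 (le_of_lt (by positivity : (0:ℝ) < 3*Real.pi/2)),
    mul_le_mul_of_nonneg_right hs1 hR0.le]
end
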